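/- arXiv:math/0007056 — 8 statements merged into one kernel-verified Lean document; each statement's English description precedes it below -/
import Mathlib

section
/- Let k be a field of characteristic p > 0, let V be a finite-dimensional k-vector space, and let L be a Lie subalgebra of End_k(V) (with the commutator bracket). Suppose L is nilpotent of nilpotence class e, i.e. C^e L = 0 where C^0 L = L and C^i L = [L, C^{i-1}L], and suppose that for each i ≥ 0 the subspace C^i L is spanned over k by elements Y satisfying Y^p = 0 (p-th power taken in the associative algebra End_k(V)). Then every X ∈ L satisfies X^{p^e} = 0 in End_k(V). -/
/-!
Jacobson's formula, qualitatively: if `x, y ∈ M` where `⁅M, M⁆ ⊆ N` and `⁅M, N⁆ ⊆ N`, then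
`(x + y) ^ p - x ^ p - y ^ p ∈ N`. Indeed, for `G = x T + y` the `T`-derivative of `G ^ p` is
`∑ G ^ i x G ^ (p - 1 - i) = (ad G) ^ (p - 1) x` in characteristic `p`, whose coefficients lie in
`N`; hence so do the coefficients of `T ^ i` in `G ^ p` for `0 < i < p`, and evaluating at
`T = 1` gives the claim.

Applied to `M = C^i L`, `N = C^{i+1} L` and a spanning set of `C^i L` killed by the `p`-th power,
it shows that `Z ^ p ∈ C^{i+1} L` for every `Z ∈ C^i L`. By induction `X ^ (p ^ i) ∈ C^i L`,
and `C^e L = 0`.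
-/

attribute [local instance 100] LieRing.ofAssociativeRing

open Finset LieAlgebra

section CharP

variable {A : Type*} [Ring A] {p : ℕ} [hp : Fact p.Prime]

theorem Nat.cast_choose_sub_one_eq_neg_one_pow (hpA : (p : A) = 0) {i : ℕ} (hi : i < p) :
    ((p - 1).choose i : A) = (-1) ^ i := by
  induction i with
  | zero => simp
  | succ i ih =>
    have pascal : (p - 1).choose i + (p - 1).choose (i + 1) = p.choose (i + 1) := by
      rw [← Nat.choose_succ_succ', Nat.sub_add_cancel hp.out.one_le]
    have hchoose : (p.choose (i + 1) : A) = 0 := by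
      obtain ⟨c, hc⟩ := hp.out.dvd_choose_self i.succ_ne_zero hi
      rw [hc, Nat.cast_mul, hpA, zero_mul]
    have := congrArg (Nat.cast : ℕ → A) pascal
    rw [Nat.cast_add, ih (by omega), hchoose] at this
    rw [pow_succ, mul_neg_one, eq_neg_of_add_eq_zero_right this]

theorem Commute.sub_pow_char_sub_one_eq_sum (hpA : (p : A) = 0) {a b : A} (h : Commute a b) :
    (a - b) ^ (p - 1) = ∑ i ∈ range p, a ^ i * b ^ (p - 1 - i) := by
  rw [sub_eq_add_neg, h.neg_right.add_pow, Nat.sub_add_cancel hp.out.one_le]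
  refine sum_congr rfl fun i hi => ?_
  have hi : i < p := mem_range.mp hi
  rw [← Nat.choose_symm (by omega : i ≤ p - 1),
    Nat.cast_choose_sub_one_eq_neg_one_pow hpA (by omega), neg_pow, mul_assoc, mul_assoc,
    ← ((Commute.neg_one_left b).pow_pow _ _).eq, ← mul_assoc ((-1) ^ _), ← pow_add,
    Even.neg_one_pow ⟨_, rfl⟩, one_mul]

theorem LieAlgebra.ad_pow_char_sub_one_apply {R : Type*} [CommRing R] [Algebra R A]
    (hpA : (p : A) = 0) (a b : A) :
    (ad R A a ^ (p - 1)) b = ∑ i ∈ range p, a ^ i * b * a ^ (p - 1 - i) := by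
  have hpEnd : (p : Module.End R A) = 0 := by
    ext x
    rw [Module.End.natCast_apply, nsmul_eq_mul, hpA, zero_mul, LinearMap.zero_apply]
  rw [congrFun (ad_eq_lmul_left_sub_lmul_right (R := R) A) a, Pi.sub_apply,
    (LinearMap.commute_mulLeft_right (R := R) a a).sub_pow_char_sub_one_eq_sum hpEnd,
    LinearMap.sum_apply]
  refine sum_congr rfl fun i _ => ?_
  rw [Module.End.mul_apply, LinearMap.pow_mulLeft, LinearMap.pow_mulRight,
    LinearMap.mulLeft_apply, LinearMap.mulRight_apply, mul_assoc]

end CharP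

theorem AddSubgroup.mem_of_nsmul_mem_of_coprime {G : Type*} [AddCommGroup G]
    {N : AddSubgroup G} {i p : ℕ} (hip : i.Coprime p) {s : G} (hps : p • s = 0)
    (hs : i • s ∈ N) : s ∈ N := by
  have bezout : s = i.gcdA p • (i • s) + i.gcdB p • (p • s) := by
    rw [← natCast_zsmul, ← natCast_zsmul, smul_smul, smul_smul, ← add_smul, mul_comm,
      mul_comm (i.gcdB p), ← Nat.gcd_eq_gcd_ab, hip.gcd_eq_one, Nat.cast_one, one_smul]
  rw [bezout, hps, smul_zero, add_zero]
  exact N.zsmul_mem hs _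

namespace Polynomial

theorem derivative_pow_eq_sum {R : Type*} [Semiring R] (f : R[X]) (n : ℕ) :
    derivative (f ^ n) = ∑ i ∈ range n, f ^ i * derivative f * f ^ (n - 1 - i) := by
  induction n with
  | zero => simp
  | succ n ih =>
    rw [pow_succ, derivative_mul, ih, sum_range_succ, sum_mul, Nat.add_sub_cancel, Nat.sub_self,
      pow_zero, mul_one]
    congr 1
    refine sum_congr rfl fun i hi => ?_
    rw [mul_assoc, ← pow_succ]
    congr 2
    have := mem_range.mp hi
    omega

variable {B : Type*} [Ring B] {M N : AddSubgroup B}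

theorem coeff_lie_mem {S : AddSubgroup B} (h : ∀ a ∈ M, ∀ b ∈ S, ⁅a, b⁆ ∈ N) {f g : B[X]}
    (hf : ∀ n, f.coeff n ∈ M) (hg : ∀ n, g.coeff n ∈ S) (n : ℕ) : ⁅f, g⁆.coeff n ∈ N := by
  have hswap : (g * f).coeff n = ∑ x ∈ antidiagonal n, g.coeff x.2 * f.coeff x.1 := by
    rw [coeff_mul, ← Nat.sum_antidiagonal_swap]
    rfl
  rw [Ring.lie_def, coeff_sub, coeff_mul, hswap, ← sum_sub_distrib]
  exact sum_mem fun x _ => by simpa only [Ring.lie_def] using h _ (hf x.1) _ (hg x.2)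

theorem coeff_ad_pow_succ_mem (hMM : ∀ a ∈ M, ∀ b ∈ M, ⁅a, b⁆ ∈ N)
    (hMN : ∀ a ∈ M, ∀ b ∈ N, ⁅a, b⁆ ∈ N) {f g : B[X]} (hf : ∀ n, f.coeff n ∈ M)
    (hg : ∀ n, g.coeff n ∈ M) (m n : ℕ) : ((ad ℤ B[X] f ^ (m + 1)) g).coeff n ∈ N := by
  induction m generalizing n with
  | zero => simpa using coeff_lie_mem hMM hf hg n
  | succ m ih =>
    rw [pow_succ', Module.End.mul_apply, ad_apply]
    exact coeff_lie_mem hMN hf ih n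

variable {p : ℕ} [hp : Fact p.Prime]

theorem coeff_derivative_pow_char_mem (hpB : (p : B) = 0)
    (hMM : ∀ a ∈ M, ∀ b ∈ M, ⁅a, b⁆ ∈ N) (hMN : ∀ a ∈ M, ∀ b ∈ N, ⁅a, b⁆ ∈ N) {G : B[X]}
    (hG : ∀ n, G.coeff n ∈ M) (hG' : ∀ n, (derivative G).coeff n ∈ M) (n : ℕ) :
    (derivative (G ^ p)).coeff n ∈ N := by
  have hpB' : (p : B[X]) = 0 := by rw [← map_natCast C, hpB, map_zero]
  obtain ⟨m, hm⟩ : ∃ m, p - 1 = m + 1 := ⟨p - 2, by have := hp.out.two_le; omega⟩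
  rw [derivative_pow_eq_sum, ← ad_pow_char_sub_one_apply (R := ℤ) hpB', hm]
  exact coeff_ad_pow_succ_mem hMM hMN hG hG' m n

theorem coeff_mem_of_coeff_derivative_mem (hpB : (p : B) = 0) {F : B[X]}
    (hF : ∀ n, (derivative F).coeff n ∈ N) {i : ℕ} (hi0 : i ≠ 0) (hip : i < p) :
    F.coeff i ∈ N := by
  have hi := hF (i - 1)
  rw [coeff_derivative, ← Nat.cast_add_one, Nat.sub_add_cancel (by omega), ← nsmul_eq_mul'] at hi
  refine AddSubgroup.mem_of_nsmul_mem_of_coprime (Nat.coprime_of_lt_prime hi0 hip hp.out).symm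
    ?_ hi
  rw [nsmul_eq_mul, hpB, zero_mul]

end Polynomial

open Polynomial in
theorem add_pow_char_sub_pow_sub_pow_mem {B : Type*} [Ring B] {p : ℕ} [hp : Fact p.Prime]
    (hpB : (p : B) = 0) {M N : AddSubgroup B} (hMM : ∀ a ∈ M, ∀ b ∈ M, ⁅a, b⁆ ∈ N)
    (hMN : ∀ a ∈ M, ∀ b ∈ N, ⁅a, b⁆ ∈ N) {x y : B} (hx : x ∈ M) (hy : y ∈ M) :
    (x + y) ^ p - x ^ p - y ^ p ∈ N := by
  set G : B[X] := C x * X + C y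
  have hG : ∀ n, G.coeff n ∈ M := fun n => by
    simp only [G, coeff_add, coeff_C_mul_X, coeff_C]
    refine add_mem ?_ ?_ <;> split_ifs <;> simp [hx, hy]
  have hG' : ∀ n, (derivative G).coeff n ∈ M := fun n => by
    simp only [G, derivative_add, derivative_C_mul_X, derivative_C, add_zero, coeff_C]
    split_ifs <;> simp [hx]
  have hGdeg : G.natDegree ≤ 1 := by
    simp only [G]
    compute_degree
  have htop : (G ^ p).coeff p = x ^ p := by
    simpa [G] using coeff_pow_of_natDegree_le (m := p) hGdeg
  have hbot : (G ^ p).coeff 0 = y ^ p := by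
    simpa [G] using map_pow constantCoeff G p
  have heval : (x + y) ^ p = ∑ i ∈ range (p + 1), (G ^ p).coeff i := by
    let φ : B[X] →+* B := eval₂RingHom' (RingHom.id B) 1 fun a => Commute.one_right a
    have hdeg : (G ^ p).natDegree < p + 1 :=
      (natDegree_pow_le_of_le p hGdeg).trans_lt (by omega)
    calc (x + y) ^ p = φ (G ^ p) := by rw [map_pow, show φ G = x + y by simp [φ, G]]
      _ = (G ^ p).eval 1 := rfl
      _ = ∑ i ∈ range (p + 1), (G ^ p).coeff i := by simp [eval_eq_sum_range' hdeg]
  rw [heval, ← htop, ← hbot, ← sum_erase_eq_sub (mem_range.2 p.lt_succ_self),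
    ← sum_erase_eq_sub (by simp [hp.out.ne_zero.symm])]
  refine sum_mem fun i hi => ?_
  have hi0 := ne_of_mem_erase hi
  have hip := ne_of_mem_erase (mem_of_mem_erase hi)
  have hip' := mem_range.1 (mem_of_mem_erase (mem_of_mem_erase hi))
  exact coeff_mem_of_coeff_derivative_mem hpB
    (coeff_derivative_pow_char_mem hpB hMM hMN hG hG') hi0 (by omega)

namespace LieSubalgebra

open LieModule

variable {k A : Type*} [CommRing k] [Ring A] [Algebra k A] (L : LieSubalgebra k A)

theorem lie_mem_map_lowerCentralSeries_succ (u : L) {j : ℕ} {b : A}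
    (hb : b ∈ (lowerCentralSeries k L L j).toSubmodule.map (L.incl : L →ₗ[k] A)) :
    ⁅(u : A), b⁆ ∈ (lowerCentralSeries k L L (j + 1)).toSubmodule.map (L.incl : L →ₗ[k] A) := by
  obtain ⟨v, hv, rfl⟩ := hb
  refine ⟨⁅u, v⁆, ?_, rfl⟩
  rw [SetLike.mem_coe, LieSubmodule.mem_toSubmodule, lowerCentralSeries_succ]
  exact LieSubmodule.lie_mem_lie (LieSubmodule.mem_top u) hv

variable (p : ℕ) [hp : Fact p.Prime] [CharP k p]

theorem pow_char_mem_map_lowerCentralSeries_succ {i : ℕ}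
    (hspan : ∃ s : Set L, (∀ Y ∈ s, (Y : A) ^ p = 0) ∧
      Submodule.span k s = (lowerCentralSeries k L L i).toSubmodule)
    {Z : L} (hZ : Z ∈ lowerCentralSeries k L L i) :
    (Z : A) ^ p ∈ (lowerCentralSeries k L L (i + 1)).toSubmodule.map (L.incl : L →ₗ[k] A) := by
  set M := (lowerCentralSeries k L L i).toSubmodule.map (L.incl : L →ₗ[k] A)
  set N := (lowerCentralSeries k L L (i + 1)).toSubmodule.map (L.incl : L →ₗ[k] A)
  obtain ⟨s, hs, hspan⟩ := hspan
  have hpA : (p : A) = 0 := by rw [← map_natCast (algebraMap k A), CharP.cast_eq_zero, map_zero]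
  have hMM : ∀ a ∈ M.toAddSubgroup, ∀ b ∈ M.toAddSubgroup, ⁅a, b⁆ ∈ N.toAddSubgroup := by
    rintro _ ⟨u, -, rfl⟩ b hb
    exact lie_mem_map_lowerCentralSeries_succ L u hb
  have hMN : ∀ a ∈ M.toAddSubgroup, ∀ b ∈ N.toAddSubgroup, ⁅a, b⁆ ∈ N.toAddSubgroup := by
    rintro _ ⟨u, -, rfl⟩ b hb
    refine Submodule.map_mono ?_ (lie_mem_map_lowerCentralSeries_succ L u hb)
    exact antitone_lowerCentralSeries k L L (Nat.le_succ _)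
  have hM : ∀ z ∈ Submodule.span k s, (z : A) ∈ M.toAddSubgroup := fun z hz =>
    ⟨z, hspan ▸ hz, rfl⟩
  rw [← LieSubmodule.mem_toSubmodule, ← hspan] at hZ
  induction hZ using Submodule.span_induction with
  | mem Y hY => rw [hs Y hY]; exact N.zero_mem
  | zero => rw [ZeroMemClass.coe_zero, zero_pow hp.out.ne_zero]; exact N.zero_mem
  | add x y hx hy hxN hyN =>
    have := add_pow_char_sub_pow_sub_pow_mem hpA hMM hMN (hM x hx) (hM y hy)
    rw [AddMemClass.coe_add]
    convert N.add_mem (N.add_mem this hxN) hyN using 1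
    abel
  | smul c x _ hxN =>
    rw [SetLike.val_smul, smul_pow]
    exact N.smul_mem _ hxN

theorem pow_char_pow_mem_map_lowerCentralSeries
    (hspan : ∀ i : ℕ, ∃ s : Set L, (∀ Y ∈ s, (Y : A) ^ p = 0) ∧
      Submodule.span k s = (lowerCentralSeries k L L i).toSubmodule)
    (X : L) (i : ℕ) :
    (X : A) ^ (p ^ i) ∈ (lowerCentralSeries k L L i).toSubmodule.map (L.incl : L →ₗ[k] A) := by
  induction i with
  | zero => exact ⟨X, LieSubmodule.mem_top X, by simp⟩
  | succ i ih =>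
    obtain ⟨Z, hZ, hXZ⟩ := ih
    rw [pow_succ, pow_mul, ← hXZ]
    exact pow_char_mem_map_lowerCentralSeries_succ L p (hspan i) hZ

end LieSubalgebra

theorem stmt0_general {k : Type*} [Field k] (p : ℕ) [Fact p.Prime] [CharP k p]
    {V : Type*} [AddCommGroup V] [Module k V]
    (L : LieSubalgebra k (Module.End k V)) (e : ℕ)
    (hnil : LieModule.lowerCentralSeries k L L e = ⊥)
    (hspan : ∀ i : ℕ, ∃ s : Set L,
      (∀ Y ∈ s, (Y : Module.End k V) ^ p = 0) ∧
      Submodule.span k s = (LieModule.lowerCentralSeries k L L i).toSubmodule)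
    (X : L) : (X : Module.End k V) ^ (p ^ e) = 0 := by
  simpa [hnil] using L.pow_char_pow_mem_map_lowerCentralSeries p hspan X e

/-- Let `k` be a field of characteristic `p > 0`, `V` a finite-dimensional
`k`-vector space, and `L` a Lie subalgebra of `End_k(V)` (commutator bracket) which is
nilpotent of class `e` (i.e. `C^e L = 0`), such that each term `C^i L` of the lower central
series is spanned over `k` by elements `Y` with `Y ^ p = 0` in `End_k(V)`.
Then every `X ∈ L` satisfies `X ^ (p ^ e) = 0` in `End_k(V)`. -/
theorem stmt0 {k : Type*} [Field k] (p : ℕ) [Fact p.Prime] [CharP k p]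
    {V : Type*} [AddCommGroup V] [Module k V] [FiniteDimensional k V]
    (L : LieSubalgebra k (Module.End k V)) (e : ℕ)
    (hnil : LieModule.lowerCentralSeries k L L e = ⊥)
    (hspan : ∀ i : ℕ, ∃ s : Set L,
      (∀ Y ∈ s, (Y : Module.End k V) ^ p = 0) ∧
      Submodule.span k s = (LieModule.lowerCentralSeries k L L i).toSubmodule)
    (X : L) : (X : Module.End k V) ^ (p ^ e) = 0 :=
  stmt0_general p L e hnil hspan X
end

section
/- Let p be a prime and let G be a nilpotent group of nilpotence class e, i.e. C^e G = 1 where C^0 G = G and C^i G = (G, C^{i-1}G) is generated by commutators. Suppose that for each i ≥ 0 the subgroup C^i G is generated by elements of order dividing p. Then x^{p^e} = 1 for every x ∈ G; that is, the exponent of G divides p^e. -/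
/-!
If `C^i G` is generated by elements `y` with `y ^ p = 1`, then every element of `C^i G` has its
`p`-th power in `C^{i+1} G`: modulo `C^{i+1} G` the image of `C^i G` is central, hence abelian,
and an abelian group generated by elements of order dividing `p` has exponent dividing `p`.
Iterating, `x ^ (p ^ i)` lies in `C^i G` for every `x`, and `C^e G = 1`.
-/

open Subgroup

theorem Subgroup.pow_mem_of_commutator_closure_le {G : Type*} [Group G] {N : Subgroup G}
    [N.Normal] {s : Set G} {n : ℕ} (hcomm : ⁅closure s, ⊤⁆ ≤ N) (hs : ∀ y ∈ s, y ^ n ∈ N)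
    {y : G} (hy : y ∈ closure s) : y ^ n ∈ N := by
  let π := QuotientGroup.mk' N
  have hcentral : ∀ a ∈ closure s, ∀ b, Commute (π a) (π b) := fun a ha b => by
    rw [← commutatorElement_eq_one_iff_commute, ← map_commutatorElement, ← MonoidHom.mem_ker,
      QuotientGroup.ker_mk']
    exact hcomm (commutator_mem_commutator ha (mem_top b))
  suffices π y ^ n = 1 by
    rwa [← map_pow, ← MonoidHom.mem_ker, QuotientGroup.ker_mk'] at this
  induction hy using closure_induction with
  | mem a ha => rw [← map_pow, ← MonoidHom.mem_ker, QuotientGroup.ker_mk']; exact hs a ha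
  | one => simp
  | mul a b ha _ hap hbp => rw [map_mul, (hcentral a ha b).mul_pow, hap, hbp, one_mul]
  | inv a _ hap => rw [map_inv, inv_pow, hap, inv_one]

theorem Subgroup.pow_mem_lowerCentralSeries_succ {G : Type*} [Group G] {p i : ℕ} {s : Set G}
    (hs : ∀ y ∈ s, y ^ p = 1) (hclosure : closure s = (⊤ : Subgroup G).lowerCentralSeries i)
    {y : G} (hy : y ∈ (⊤ : Subgroup G).lowerCentralSeries i) :
    y ^ p ∈ (⊤ : Subgroup G).lowerCentralSeries (i + 1) := by
  rw [← hclosure] at hy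
  refine pow_mem_of_commutator_closure_le ?_ (fun y hy => ?_) hy
  · rw [hclosure, lowerCentralSeries_succ]
  · rw [hs y hy]
    exact one_mem _

theorem Subgroup.pow_pow_mem_lowerCentralSeries {G : Type*} [Group G] {p : ℕ}
    (hgen : ∀ i : ℕ, ∃ s : Set G,
      (∀ y ∈ s, y ^ p = 1) ∧ closure s = (⊤ : Subgroup G).lowerCentralSeries i)
    (x : G) (n : ℕ) : x ^ (p ^ n) ∈ (⊤ : Subgroup G).lowerCentralSeries n := by
  induction n with
  | zero => simp
  | succ n ih =>
    obtain ⟨s, hs, hclosure⟩ := hgen n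
    rw [pow_succ, pow_mul]
    exact pow_mem_lowerCentralSeries_succ hs hclosure ih

theorem stmt1_general {G : Type*} [Group G] (p : ℕ) (e : ℕ)
    (hnil : (⊤ : Subgroup G).lowerCentralSeries e = ⊥)
    (hgen : ∀ i : ℕ, ∃ s : Set G,
      (∀ y ∈ s, y ^ p = 1) ∧ Subgroup.closure s = (⊤ : Subgroup G).lowerCentralSeries i)
    (x : G) : x ^ (p ^ e) = 1 := by
  simpa [hnil] using pow_pow_mem_lowerCentralSeries hgen x e

/-- Let `p` be a prime and `G` a nilpotent group of nilpotence class `e`,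
i.e. `C^e G = 1` for the lower central series. Suppose that for each `i ≥ 0` the subgroup
`C^i G` is generated by elements of order dividing `p`. Then `x ^ (p ^ e) = 1` for every
`x ∈ G`; that is, the exponent of `G` divides `p ^ e`. -/
theorem stmt1 {G : Type*} [Group G] (p : ℕ) (hp : p.Prime) (e : ℕ)
    (hnil : (⊤ : Subgroup G).lowerCentralSeries e = ⊥)
    (hgen : ∀ i : ℕ, ∃ s : Set G,
      (∀ y ∈ s, y ^ p = 1) ∧ Subgroup.closure s = (⊤ : Subgroup G).lowerCentralSeries i)
    (x : G) : x ^ (p ^ e) = 1 :=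
  stmt1_general p e hnil hgen x
end

section
/- Let p be a prime and let F(t) = exp(t + t^p/p + t^{p^2}/p^2 + ⋯) ∈ ℚ[[t]] be the Artin–Hasse exponential series (the formal exponential applied to the series ∑_{i≥0} t^{p^i}/p^i, which has zero constant term). Then every coefficient of F(t) lies in ℤ_(p); that is, each coefficient is a rational number with nonnegative p-adic valuation. -/
open Classical in
/-- The series `∑_{i ≥ 0} t^(p^i) / p^i ∈ ℚ[[t]]`: its coefficient at `t^n` is `1/n = 1/p^i`
when `n = p^i` is a power of `p`, and `0` otherwise. -/
noncomputable def artinHasseArg (p : ℕ) : PowerSeries ℚ :=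
  PowerSeries.mk fun n => if ∃ i : ℕ, p ^ i = n then (n : ℚ)⁻¹ else 0

/-- The Artin–Hasse exponential `F(t) = exp(∑_{i ≥ 0} t^(p^i)/p^i)`, where the formal
exponential of a series `S` with zero constant term has `n`-th coefficient
`∑_{k} coeff n (S^k) / k!` (the terms with `k > n` vanish). -/
noncomputable def artinHasseSeries (p : ℕ) : PowerSeries ℚ :=
  PowerSeries.mk fun n =>
    ∑ k ∈ Finset.range (n + 1), ((k.factorial : ℚ)⁻¹) * PowerSeries.coeff n (artinHasseArg p ^ k)


/-!
Dwork's argument. Put `S = ∑ t^(p^i) / p^i`, so that `p S = p t + S(t^p)`. The formal exponential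
turns sums into products and commutes with `t ↦ t^p`, hence `F(t)^p = exp(p t) · F(t^p)`, and
`exp(p t) ≡ 1 mod p` because `v_p(k!) < k`. If `f_0, …, f_{n-1}` are `p`-integral and `Q` is their
truncation, comparing coefficients of `t^n` gives
`p f_n = [(exp(p t) - 1) F(t^p)]_n + [Q(t^p) - Q(t)^p]_n`,
and both terms are divisible by `p`, the second since `Q(t)^p ≡ Q(t^p) mod p` for integral `Q`.
-/

open PowerSeries Finset

theorem PowerSeries.coeff_pow_eq_zero_of_lt {R : Type*} [CommSemiring R] {A : PowerSeries R}
    (hA : constantCoeff A = 0) {m k : ℕ} (h : m < k) : coeff m (A ^ k) = 0 :=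
  X_pow_dvd_iff.1 (pow_dvd_pow_of_dvd (X_dvd_iff.2 hA) k) m h

theorem PowerSeries.quotientMk_pow_eq_zero {R : Type*} [CommRing R] {A : PowerSeries R}
    (hA : constantCoeff A = 0) (n : ℕ) : Ideal.Quotient.mk (Ideal.span {X ^ n}) A ^ n = 0 := by
  rw [← map_pow, Ideal.Quotient.eq_zero_iff_mem, Ideal.mem_span_singleton]
  exact pow_dvd_pow_of_dvd (X_dvd_iff.2 hA) n

theorem PowerSeries.eq_of_forall_quotientMk_eq {R : Type*} [CommRing R] {F G : PowerSeries R}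
    (h : ∀ n, Ideal.Quotient.mk (Ideal.span {X ^ n}) F = Ideal.Quotient.mk (Ideal.span {X ^ n}) G) :
    F = G := by
  ext n
  have := Ideal.mem_span_singleton.1 (Ideal.Quotient.eq.1 (h (n + 1)))
  exact sub_eq_zero.1 (by simpa using X_pow_dvd_iff.1 this n n.lt_succ_self)

noncomputable def formalExp (A : PowerSeries ℚ) : PowerSeries ℚ :=
  PowerSeries.mk fun n => ∑ k ∈ range (n + 1), (k.factorial : ℚ)⁻¹ * coeff n (A ^ k)

section formalExp

variable {A B : PowerSeries ℚ}

theorem constantCoeff_formalExp (A : PowerSeries ℚ) : constantCoeff (formalExp A) = 1 := by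
  rw [← coeff_zero_eq_constantCoeff_apply, formalExp, coeff_mk]
  simp

theorem coeff_formalExp_of_le (hA : constantCoeff A = 0) {m N : ℕ} (h : m ≤ N) :
    coeff m (formalExp A) = ∑ k ∈ range (N + 1), (k.factorial : ℚ)⁻¹ * coeff m (A ^ k) := by
  rw [formalExp, coeff_mk]
  refine sum_subset (range_subset_range.2 (by omega)) fun k _ hk => ?_
  rw [coeff_pow_eq_zero_of_lt hA (by simpa using hk), mul_zero]

theorem X_pow_dvd_formalExp_sub (hA : constantCoeff A = 0) (n : ℕ) :
    X ^ n ∣ formalExp A - ∑ k ∈ range n, (k.factorial : ℚ)⁻¹ • A ^ k := by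
  refine X_pow_dvd_iff.2 fun m hm => ?_
  rw [map_sub, coeff_formalExp_of_le hA (Nat.le_sub_one_of_lt hm), Nat.sub_add_cancel (by omega),
    map_sum, sub_eq_zero]
  simp only [coeff_smul, smul_eq_mul]

/- Modulo `X ^ n` the series `A` is nilpotent, so `formalExp` inherits the functional equation of
`IsNilpotent.exp`. -/
theorem quotientMk_formalExp (hA : constantCoeff A = 0) (n : ℕ) :
    Ideal.Quotient.mk (Ideal.span {X ^ n}) (formalExp A) =
      IsNilpotent.exp (Ideal.Quotient.mk (Ideal.span {X ^ n}) A) := by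
  rw [IsNilpotent.exp_eq_sum (quotientMk_pow_eq_zero hA n), Ideal.Quotient.eq.2
    (Ideal.mem_span_singleton.2 (X_pow_dvd_formalExp_sub hA n))]
  simp only [map_sum, map_rat_smul, map_pow]

theorem formalExp_add (hA : constantCoeff A = 0) (hB : constantCoeff B = 0) :
    formalExp (A + B) = formalExp A * formalExp B := by
  refine eq_of_forall_quotientMk_eq fun n => ?_
  rw [map_mul, quotientMk_formalExp (by simp [hA, hB]), quotientMk_formalExp hA, quotientMk_formalExp hB, map_add,
    IsNilpotent.exp_add_of_commute (Commute.all _ _) ⟨n, quotientMk_pow_eq_zero hA n⟩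
      ⟨n, quotientMk_pow_eq_zero hB n⟩]

theorem formalExp_zero : formalExp 0 = 1 :=
  eq_of_forall_quotientMk_eq fun n => by
    rw [quotientMk_formalExp (map_zero _), map_zero, IsNilpotent.exp_zero, map_one]

theorem formalExp_nsmul (hA : constantCoeff A = 0) (m : ℕ) :
    formalExp (m • A) = formalExp A ^ m := by
  induction m with
  | zero => rw [zero_smul, formalExp_zero, pow_zero]
  | succ m ih => rw [succ_nsmul, formalExp_add (by simp [hA]) hA, ih, pow_succ]

theorem formalExp_expand {p : ℕ} (hp : p ≠ 0) (hA : constantCoeff A = 0) :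
    formalExp (expand p hp A) = expand p hp (formalExp A) := by
  ext n
  rw [coeff_expand, formalExp, coeff_mk]
  simp only [← map_pow, coeff_expand]
  split_ifs
  · rw [coeff_formalExp_of_le hA (Nat.div_le_self n p)]
  · simp

theorem coeff_formalExp_nsmul_X (c n : ℕ) :
    coeff n (formalExp (c • X)) = (c : ℚ) ^ n / n.factorial := by
  have hterm (k : ℕ) :
      coeff n ((c • X : PowerSeries ℚ) ^ k) = if n = k then (c : ℚ) ^ k else 0 := by
    rw [smul_pow, map_nsmul, coeff_X_pow, nsmul_eq_mul, Nat.cast_pow]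
    split_ifs <;> simp
  rw [formalExp, coeff_mk, sum_eq_single_of_mem n (self_mem_range_succ n)]
  · rw [hterm, if_pos rfl, div_eq_inv_mul]
  · intro k _ hk
    rw [hterm, if_neg hk.symm, mul_zero]

end formalExp

section artinHasse

variable {p : ℕ}

theorem artinHasseSeries_eq_formalExp : artinHasseSeries p = formalExp (artinHasseArg p) := rfl

theorem coeff_artinHasseArg_pow (i : ℕ) :
    coeff (p ^ i) (artinHasseArg p) = ((p : ℚ) ^ i)⁻¹ := by
  rw [artinHasseArg, coeff_mk, if_pos ⟨i, rfl⟩, Nat.cast_pow]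

theorem coeff_artinHasseArg_of_forall_ne {n : ℕ} (hn : ∀ i, p ^ i ≠ n) :
    coeff n (artinHasseArg p) = 0 := by
  rw [artinHasseArg, coeff_mk, if_neg (not_exists.2 hn)]

theorem constantCoeff_artinHasseArg (hp : p ≠ 0) : constantCoeff (artinHasseArg p) = 0 := by
  rw [← coeff_zero_eq_constantCoeff_apply]
  exact coeff_artinHasseArg_of_forall_ne fun i => (pow_pos (Nat.pos_of_ne_zero hp) i).ne'

theorem nsmul_artinHasseArg (hp : 1 < p) :
    p • artinHasseArg p = p • X + expand p (Nat.ne_zero_of_lt hp) (artinHasseArg p) := by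
  ext n
  simp only [map_add, map_nsmul, coeff_X, coeff_expand]
  simp only [nsmul_eq_mul]
  by_cases hpow : ∃ i, p ^ i = n
  · obtain ⟨i | i, rfl⟩ := hpow
    · have hndvd : ¬ p ∣ 1 := fun h => by simpa using Nat.le_of_dvd one_pos h |>.trans_lt hp
      have h1 := coeff_artinHasseArg_pow (p := p) 0
      simp only [pow_zero, inv_one] at h1
      simp [h1, hndvd]
    · have hne : p ^ (i + 1) ≠ 1 := (Nat.one_lt_pow (Nat.succ_ne_zero i) hp).ne'
      have hdiv : p ^ (i + 1) / p = p ^ i := by rw [pow_succ, Nat.mul_div_cancel _ (by omega)]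
      rw [coeff_artinHasseArg_pow, if_neg hne, if_pos (dvd_pow_self p i.succ_ne_zero), hdiv,
        coeff_artinHasseArg_pow]
      field_simp
      ring
  · push Not at hpow
    have hne : n ≠ 1 := fun h => hpow 0 (by simp [h])
    rw [coeff_artinHasseArg_of_forall_ne hpow, if_neg hne]
    split_ifs with hdvd
    · rw [coeff_artinHasseArg_of_forall_ne fun i hi => hpow (i + 1) ?_]
      · simp
      · rw [pow_succ, hi, Nat.div_mul_cancel hdvd]
    · simp

theorem artinHasseSeries_pow (hp : 1 < p) :
    artinHasseSeries p ^ p =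
      formalExp (p • X) * expand p (Nat.ne_zero_of_lt hp) (artinHasseSeries p) := by
  have hS := constantCoeff_artinHasseArg (Nat.ne_zero_of_lt hp)
  rw [artinHasseSeries_eq_formalExp, ← formalExp_nsmul hS, nsmul_artinHasseArg hp,
    formalExp_add (by simp) (by simp [hS]), formalExp_expand _ hS]

end artinHasse

theorem PowerSeries.norm_coeff_mul_le {K : Type*} [NormedRing K] [IsUltrametricDist K]
    {A B : PowerSeries K} {n : ℕ} {a b : ℝ} (ha : ∀ i ≤ n, ‖coeff i A‖ ≤ a)
    (hb : ∀ j ≤ n, ‖coeff j B‖ ≤ b) : ‖coeff n (A * B)‖ ≤ a * b := by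
  have ha0 : 0 ≤ a := (norm_nonneg _).trans (ha 0 n.zero_le)
  have hb0 : 0 ≤ b := (norm_nonneg _).trans (hb 0 n.zero_le)
  rw [coeff_mul]
  refine IsUltrametricDist.norm_sum_le_of_forall_le_of_nonneg (mul_nonneg ha0 hb0) fun x hx => ?_
  exact (norm_mul_le _ _).trans (mul_le_mul (ha _ (HasAntidiagonal.antidiagonal.fst_le hx))
    (hb _ (HasAntidiagonal.antidiagonal.snd_le hx)) (norm_nonneg _) ha0)

theorem PowerSeries.coeff_add_pow_succ_of_X_pow_dvd {R : Type*} [CommRing R]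
    {Q H : PowerSeries R} {n : ℕ} (hn : 0 < n) (hH : X ^ n ∣ H) (k : ℕ) :
    coeff n ((Q + H) ^ (k + 1)) =
      coeff n (Q ^ (k + 1)) + (k + 1) * constantCoeff Q ^ k * coeff n H := by
  obtain ⟨c, hc⟩ := (Polynomial.X ^ (k + 1) : Polynomial (PowerSeries R)).binomExpansion Q H
  simp only [Polynomial.eval_pow, Polynomial.eval_X, Polynomial.derivative_X_pow,
    Polynomial.eval_mul, Polynomial.eval_C, Nat.cast_add, Nat.cast_one,
    add_tsub_cancel_right] at hc
  obtain ⟨G, rfl⟩ := hH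
  have h1 : (k + 1 : PowerSeries R) * Q ^ k * (X ^ n * G) =
      X ^ n * ((k + 1 : PowerSeries R) * Q ^ k * G) := by ring
  have h2 : c * (X ^ n * G) ^ 2 = X ^ n * (X ^ n * (c * G ^ 2)) := by ring
  rw [hc, h1, h2]
  simp [coeff_X_pow_mul', hn.ne']

theorem PowerSeries.coeff_pow_succ_eq_coeff_trunc_pow_add {R : Type*} [CommRing R]
    {F : PowerSeries R} (hF : constantCoeff F = 1) {n : ℕ} (hn : 0 < n) (k : ℕ) :
    coeff n (F ^ (k + 1)) =
      coeff n ((trunc n F : PowerSeries R) ^ (k + 1)) + (k + 1) * coeff n F := by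
  set Q : PowerSeries R := ↑(trunc n F)
  have hQ (m : ℕ) : coeff m Q = if m < n then coeff m F else 0 := by
    simp only [Q, Polynomial.coeff_coe, coeff_trunc]
  have hdvd : X ^ n ∣ F - Q := X_pow_dvd_iff.2 fun m hm => by simp [hQ, hm]
  have hQ_const : constantCoeff Q = 1 := by
    rw [← coeff_zero_eq_constantCoeff_apply, hQ, if_pos hn, coeff_zero_eq_constantCoeff_apply, hF]
  have := coeff_add_pow_succ_of_X_pow_dvd (Q := Q) hn hdvd k
  rwa [add_sub_cancel, hQ_const, one_pow, mul_one, map_sub, hQ, if_neg (lt_irrefl n),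
    sub_zero] at this

section padic

variable {p : ℕ} [hp : Fact p.Prime]

theorem map_toZMod_pow_eq_expand (G : PowerSeries ℤ_[p]) :
    map PadicInt.toZMod (G ^ p) = map PadicInt.toZMod (expand p hp.out.ne_zero G) := by
  have := MvPowerSeries.map_frobenius_expand p hp.out.ne_zero
    (f := map (PadicInt.toZMod (p := p)) G)
  rw [ZMod.frobenius_zmod, MvPowerSeries.map_id] at this
  rw [map_pow, map_expand]
  exact this.symm

theorem norm_coeff_pow_sub_expand_le {G : PowerSeries ℚ_[p]} (hG : ∀ m, ‖coeff m G‖ ≤ 1)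
    (n : ℕ) : ‖coeff n (G ^ p - expand p hp.out.ne_zero G)‖ ≤ (p : ℝ)⁻¹ := by
  choose g hg using fun m => (⟨⟨coeff m G, hG m⟩, rfl⟩ : ∃ z : ℤ_[p], (z : ℚ_[p]) = coeff m G)
  set G' : PowerSeries ℤ_[p] := PowerSeries.mk g
  have hG' : map PadicInt.Coe.ringHom G' = G := by
    ext m
    rw [coeff_map, coeff_mk]
    exact hg m
  have hmem : coeff n (G' ^ p - expand p hp.out.ne_zero G') ∈ Ideal.span {(p : ℤ_[p]) ^ 1} := by
    rw [pow_one, ← PadicInt.maximalIdeal_eq_span_p, ← PadicInt.ker_toZMod, RingHom.mem_ker,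
      ← coeff_map, map_sub, map_toZMod_pow_eq_expand, sub_self, map_zero]
  rw [← hG', ← map_pow, ← map_expand, ← map_sub, coeff_map]
  change ‖((_ : ℤ_[p]) : ℚ_[p])‖ ≤ _
  rw [← PadicInt.norm_def]
  simpa using (PadicInt.norm_le_pow_iff_mem_span_pow _ 1).2 hmem

theorem norm_pow_div_factorial_le {i : ℕ} (hi : i ≠ 0) :
    ‖(((p : ℚ) ^ i / i.factorial : ℚ) : ℚ_[p])‖ ≤ (p : ℝ)⁻¹ := by
  have hne : ((p : ℚ) ^ i / i.factorial : ℚ) ≠ 0 := by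
    have := hp.out.pos
    positivity
  have hval : 1 ≤ padicValRat p ((p : ℚ) ^ i / i.factorial) := by
    rw [padicValRat.div (by simp [hp.out.ne_zero]) (by positivity), padicValRat.pow,
      padicValRat.self hp.out.one_lt, padicValRat.of_nat]
    have := padicValNat_factorial_lt_of_ne_zero (p := p) hi
    omega
  rw [Padic.norm_eq_zpow_neg_valuation (by exact_mod_cast hne), Padic.valuation_ratCast,
    ← zpow_neg_one]
  exact zpow_le_zpow_right₀ (by exact_mod_cast hp.out.one_lt.le) (by omega)

theorem norm_coeff_formalExp_nsmul_X_sub_one_le (i : ℕ) :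
    ‖((coeff i (formalExp (p • X) - 1) : ℚ) : ℚ_[p])‖ ≤ (p : ℝ)⁻¹ := by
  rcases eq_or_ne i 0 with rfl | hi
  · simp [constantCoeff_formalExp]
  · rw [map_sub, coeff_formalExp_nsmul_X, coeff_one, if_neg hi, sub_zero]
    exact norm_pow_div_factorial_le hi

theorem norm_coeff_le_one_of_pow_eq_mul_expand {F E : PowerSeries ℚ_[p]}
    (hF : constantCoeff F = 1) (hE : ∀ i, ‖coeff i (E - 1)‖ ≤ (p : ℝ)⁻¹)
    (h : F ^ p = E * expand p hp.out.ne_zero F) (n : ℕ) : ‖coeff n F‖ ≤ 1 := by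
  induction n using Nat.strong_induction_on with
  | _ n IH =>
  rcases Nat.eq_zero_or_pos n with rfl | hn
  · simp [hF]
  set Q : PowerSeries ℚ_[p] := ↑(trunc n F)
  have hQ (m : ℕ) : coeff m Q = if m < n then coeff m F else 0 := by
    simp only [Q, Polynomial.coeff_coe, coeff_trunc]
  have hQ_int (m : ℕ) : ‖coeff m Q‖ ≤ 1 := by
    rw [hQ]
    split_ifs with hm
    exacts [IH m hm, by simp]
  have hdiv {j : ℕ} (hj : j ≤ n) : j / p < n :=
    (Nat.div_le_div_right hj).trans_lt (Nat.div_lt_self hn hp.out.one_lt)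
  have hexpand_int (j : ℕ) (hj : j ≤ n) : ‖coeff j (expand p hp.out.ne_zero F)‖ ≤ 1 := by
    rw [coeff_expand]
    split_ifs
    exacts [IH _ (hdiv hj), by simp]
  have hexpand : coeff n (expand p hp.out.ne_zero F) = coeff n (expand p hp.out.ne_zero Q) := by
    simp only [coeff_expand, hQ, if_pos (hdiv le_rfl)]
  have hpow : coeff n (F ^ p) = coeff n (Q ^ p) + p * coeff n F := by
    simpa [Nat.sub_add_cancel hp.out.one_le, Nat.cast_pred hp.out.pos] using
      coeff_pow_succ_eq_coeff_trunc_pow_add hF hn (p - 1)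
  have key : (p : ℚ_[p]) * coeff n F = coeff n ((E - 1) * expand p hp.out.ne_zero F) +
      coeff n (expand p hp.out.ne_zero Q - Q ^ p) := by
    have := congrArg (coeff n) h
    rw [hpow, show E * _ = (E - 1) * expand p hp.out.ne_zero F + expand p hp.out.ne_zero F by ring,
      map_add, hexpand] at this
    rw [map_sub]
    linear_combination this
  have hbound : ‖(p : ℚ_[p]) * coeff n F‖ ≤ (p : ℝ)⁻¹ := by
    rw [key]
    refine (IsUltrametricDist.norm_add_le_max _ _).trans (max_le ?_ ?_)
    · simpa using norm_coeff_mul_le (fun i _ => hE i) hexpand_int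
    · rw [← norm_neg, ← map_neg, neg_sub]
      exact norm_coeff_pow_sub_expand_le hQ_int n
  rw [norm_mul, Padic.norm_p] at hbound
  exact le_of_mul_le_mul_left (by simpa using hbound) (by simpa using hp.out.pos)

end padic

/-- every coefficient of the Artin–Hasse series `F(t) = exp(∑ t^(p^i)/p^i)`
lies in `ℤ_(p)`, i.e. is a rational number with nonnegative `p`-adic valuation. -/
theorem stmt2 (p : ℕ) (hp : p.Prime) (n : ℕ) :
    0 ≤ padicValRat p (PowerSeries.coeff n (artinHasseSeries p)) := by
  have : Fact p.Prime := ⟨hp⟩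
  rw [← Padic.valuation_ratCast, ← Padic.norm_le_one_iff_val_nonneg, ← Rat.coe_castHom,
    ← coeff_map]
  refine norm_coeff_le_one_of_pow_eq_mul_expand
    (E := map (Rat.castHom ℚ_[p]) (formalExp (p • X))) ?_ (fun i => ?_) ?_ n
  · rw [← coeff_zero_eq_constantCoeff_apply, coeff_map, coeff_zero_eq_constantCoeff_apply,
      artinHasseSeries_eq_formalExp, constantCoeff_formalExp, map_one]
  · rw [← map_one (map (Rat.castHom ℚ_[p])), ← map_sub, coeff_map]
    exact norm_coeff_formalExp_nsmul_X_sub_one_le i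
  · rw [← map_pow, artinHasseSeries_pow hp.one_lt, map_mul, map_expand]
end

section
/- Let p be a prime, n ≥ 1 an integer, Λ a commutative ℚ-algebra, A an associative unital Λ-algebra, and X ∈ A a nilpotent element with X^{p^n} = 0. For a nilpotent element a ∈ A, define exp(a) = ∑_{k ≥ 0} a^k/k! (a finite sum) and F(a) = exp(∑_{i ≥ 0} a^{p^i}/p^i) (the Artin–Hasse exponential evaluated at the nilpotent element a; the inner sum is finite). Then for all t_0, …, t_{n−1} ∈ Λ: exp( ∑_{j=0}^{n−1} p^{−j} w_j(t_0,…,t_j) X^{p^j} ) = ∏_{m=0}^{n−1} F(t_m · X^{p^m}), where w_j(t_0,…,t_j) = ∑_{m=0}^{j} p^m t_m^{p^{j−m}} is the j-th ghost (Witt) polynomial. (The factors on the right pairwise commute, being polynomials in X.) -/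
/-- The exponential `exp(a) = ∑_{k ≥ 0} a^k / k!` of a nilpotent element `a` of a
`ℚ`-algebra, truncated at `N`; when `a ^ N = 0` the omitted terms vanish, so this is the
full (finite) exponential sum. -/
noncomputable def expNil {A : Type*} [Ring A] [Algebra ℚ A] (N : ℕ) (a : A) : A :=
  ∑ k ∈ Finset.range N, (k.factorial : ℚ)⁻¹ • a ^ k

/-- The Artin–Hasse exponential `F(a) = exp(∑_{i ≥ 0} a^(p^i) / p^i)` of a nilpotent
element `a` with `a ^ (p ^ n) = 0`: the inner sum is truncated at `i < n` (the remaining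
terms vanish), and the exponential sum is truncated at `p ^ n` (again the remaining terms
vanish). -/
noncomputable def artinHasseNil {A : Type*} [Ring A] [Algebra ℚ A] (p n : ℕ) (a : A) : A :=
  expNil (p ^ n) (∑ i ∈ Finset.range n, ((p : ℚ) ^ i)⁻¹ • a ^ p ^ i)

/-!
Substituting `j = m + i` in the ghost polynomials rewrites the exponent as
`∑_m ∑_i (t_m X^(p^m))^(p^i) / p^i`, the terms with `m + i ≥ n` vanishing since `X^(p^n) = 0`;
the inner sums are the logarithms of the factors `F(t_m X^(p^m))`. All these elements are
images under `T ↦ X` of polynomials divisible by `T`, so they commute and have vanishing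
`p^n`-th powers, and on such elements the truncated exponential turns sums into products.
-/

open Finset Polynomial

theorem expNil_eq_exp {A : Type*} [Ring A] [Algebra ℚ A] {N : ℕ} {a : A} (h : a ^ N = 0) :
    expNil N a = IsNilpotent.exp a :=
  (IsNilpotent.exp_eq_sum h).symm

theorem isNilpotent_list_sum {A : Type*} [Ring A] {l : List A} (hc : l.Pairwise Commute)
    (hn : ∀ a ∈ l, IsNilpotent a) : IsNilpotent l.sum := by
  induction l with
  | nil => simp
  | cons a l ih =>
    rw [List.pairwise_cons] at hc
    rw [List.forall_mem_cons] at hn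
    exact (Commute.list_sum_right a l hc.1).isNilpotent_add hn.1 (ih hc.2 hn.2)

theorem IsNilpotent.exp_list_sum {A : Type*} [Ring A] [Module ℚ A] {l : List A}
    (hc : l.Pairwise Commute) (hn : ∀ a ∈ l, IsNilpotent a) :
    exp l.sum = (l.map exp).prod := by
  induction l with
  | nil => simp
  | cons a l ih =>
    rw [List.pairwise_cons] at hc
    rw [List.forall_mem_cons] at hn
    rw [List.sum_cons, exp_add_of_commute (Commute.list_sum_right a l hc.1) hn.1
      (isNilpotent_list_sum hc.2 hn.2), ih hc.2 hn.2, List.map_cons, List.prod_cons]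

section Aeval

variable {R A : Type*} [CommRing R] [Ring A] [Algebra R A] {x : A} {N : ℕ}

theorem pow_aeval_eq_zero_of_X_dvd (hx : x ^ N = 0) {q : R[X]} (hq : X ∣ q) :
    aeval x q ^ N = 0 := by
  obtain ⟨r, rfl⟩ := hq
  have hxr : Commute x (aeval x r) := by simpa using (Commute.all X r).map (aeval x)
  rw [map_mul, aeval_X, hxr.mul_pow, hx, zero_mul]

theorem expNil_list_sum_aeval [Algebra ℚ A] (hx : x ^ N = 0) {ι : Type*} {q : ι → R[X]}
    (hq : ∀ i, X ∣ q i) (l : List ι) :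
    expNil N (l.map fun i ↦ aeval x (q i)).sum
      = (l.map fun i ↦ expNil N (aeval x (q i))).prod := by
  have hnil (i : ι) : aeval x (q i) ^ N = 0 := pow_aeval_eq_zero_of_X_dvd hx (hq i)
  have hsum : aeval x (l.map q).sum ^ N = 0 :=
    pow_aeval_eq_zero_of_X_dvd hx (List.dvd_sum (by simpa using fun i _ ↦ hq i))
  have hmap : (l.map fun i ↦ aeval x (q i)).sum = aeval x (l.map q).sum := by
    rw [map_list_sum, List.map_map]
    rfl
  rw [hmap, expNil_eq_exp hsum, ← hmap, IsNilpotent.exp_list_sum, List.map_map]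
  · exact congrArg List.prod <| List.map_congr_left fun i _ ↦ (expNil_eq_exp (hnil i)).symm
  · exact List.pairwise_map.2 (List.pairwise_of_forall fun _ _ ↦ (Commute.all _ _).map _)
  · simpa using fun i _ ↦ ⟨N, hnil i⟩

end Aeval

noncomputable def artinHasseLog {A : Type*} [Ring A] [Algebra ℚ A] (p n : ℕ) (a : A) : A :=
  ∑ i ∈ range n, ((p : ℚ) ^ i)⁻¹ • a ^ p ^ i

theorem artinHasseNil_eq_expNil_artinHasseLog {A : Type*} [Ring A] [Algebra ℚ A] (p n : ℕ)
    (a : A) : artinHasseNil p n a = expNil (p ^ n) (artinHasseLog p n a) :=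
  rfl

theorem map_artinHasseLog {A B F : Type*} [Ring A] [Algebra ℚ A] [Ring B] [Algebra ℚ B]
    [FunLike F A B] [RingHomClass F A B] (f : F) (p n : ℕ) (a : A) :
    f (artinHasseLog p n a) = artinHasseLog p n (f a) := by
  simp only [artinHasseLog, map_sum, map_rat_smul, map_pow]

theorem dvd_artinHasseLog {B : Type*} [CommRing B] [Algebra ℚ B] {p : ℕ} (hp : p ≠ 0) (n : ℕ)
    {d a : B} (h : d ∣ a) : d ∣ artinHasseLog p n a := by
  refine dvd_sum fun i _ ↦ ?_
  rw [Algebra.smul_def]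
  exact dvd_mul_of_dvd_right (h.pow (pow_ne_zero i hp)) _

section Ghost

variable {Λ A : Type*} [CommRing Λ] [Ring A] [Algebra Λ A] {p : ℕ}

theorem algebraMap_mul_pow_pow_pow (s : Λ) (x : A) (m i : ℕ) :
    (algebraMap Λ A s * x ^ p ^ m) ^ p ^ i = algebraMap Λ A (s ^ p ^ i) * x ^ p ^ (m + i) := by
  rw [(Algebra.commute_algebraMap_left s _).mul_pow, ← map_pow, ← pow_mul, ← pow_add]

variable [Algebra ℚ A]

theorem ghost_summand_eq (hp : p ≠ 0) (s : Λ) (x : A) (m i : ℕ) :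
    ((p : ℚ) ^ (m + i))⁻¹ • (algebraMap Λ A ((p : Λ) ^ m * s ^ p ^ i) * x ^ p ^ (m + i))
      = ((p : ℚ) ^ i)⁻¹ • (algebraMap Λ A s * x ^ p ^ m) ^ p ^ i := by
  have hpQ : (p : ℚ) ≠ 0 := Nat.cast_ne_zero.mpr hp
  have hcast : algebraMap Λ A ((p : Λ) ^ m) = algebraMap ℚ A ((p : ℚ) ^ m) := by simp
  rw [algebraMap_mul_pow_pow_pow, map_mul, hcast, mul_assoc, ← Algebra.smul_def, smul_smul]
  congr 1
  rw [pow_add]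
  field_simp

theorem sum_ghost_smul_eq_sum_artinHasseLog (hp : p ≠ 0) {n : ℕ} {x : A} (hx : x ^ p ^ n = 0)
    (t : ℕ → Λ) :
    ∑ j ∈ range n, ((p : ℚ) ^ j)⁻¹ •
        (algebraMap Λ A (∑ m ∈ range (j + 1), (p : Λ) ^ m * t m ^ p ^ (j - m)) * x ^ p ^ j)
      = ∑ m ∈ range n, artinHasseLog p n (algebraMap Λ A (t m) * x ^ p ^ m) := by
  let term (m i : ℕ) : A := ((p : ℚ) ^ i)⁻¹ • (algebraMap Λ A (t m) * x ^ p ^ m) ^ p ^ i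
  calc _ = ∑ j ∈ range n, ∑ m ∈ range (j + 1), term m (j - m) := by
        refine sum_congr rfl fun j _ ↦ ?_
        rw [map_sum, sum_mul, smul_sum]
        refine sum_congr rfl fun m hm ↦ ?_
        obtain ⟨i, rfl⟩ := Nat.exists_eq_add_of_le (Nat.lt_succ_iff.mp (mem_range.mp hm))
        rw [Nat.add_sub_cancel_left, ghost_summand_eq hp]
    _ = ∑ m ∈ range n, ∑ i ∈ range (n - m), term m i := sum_range_diag_flip n term
    _ = _ := by
        refine sum_congr rfl fun m _ ↦ sum_subset (range_subset_range.mpr (Nat.sub_le n m))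
          fun i _ hi ↦ ?_
        have hni : n ≤ m + i := by simp only [mem_range] at hi; omega
        dsimp only [term]
        rw [algebraMap_mul_pow_pow_pow,
          pow_eq_zero_of_le (Nat.pow_le_pow_right (Nat.pos_of_ne_zero hp) hni) hx,
          mul_zero, smul_zero]

end Ghost

theorem stmt5_general (p : ℕ) (hp : p.Prime) (n : ℕ)
    (Λ : Type*) [CommRing Λ] [Algebra ℚ Λ]
    (A : Type*) [Ring A] [Algebra ℚ A] [Algebra Λ A]
    (X : A) (hX : X ^ p ^ n = 0) (t : ℕ → Λ) :
    expNil (p ^ n)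
        (∑ j ∈ Finset.range n, ((p : ℚ) ^ j)⁻¹ •
          (algebraMap Λ A (∑ m ∈ Finset.range (j + 1), (p : Λ) ^ m * t m ^ p ^ (j - m))
            * X ^ p ^ j))
      = ((List.range n).map fun m =>
          artinHasseNil p n (algebraMap Λ A (t m) * X ^ p ^ m)).prod := by
  let Q (m : ℕ) : Λ[X] := artinHasseLog p n (monomial (p ^ m) (t m))
  have hQ (m : ℕ) : aeval X (Q m) = artinHasseLog p n (algebraMap Λ A (t m) * X ^ p ^ m) := by
    simp only [Q, map_artinHasseLog, aeval_monomial]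
  have hdvd (m : ℕ) : Polynomial.X ∣ Q m := by
    refine dvd_artinHasseLog hp.ne_zero n ?_
    rw [← C_mul_X_pow_eq_monomial]
    exact (dvd_pow_self _ (pow_ne_zero m hp.ne_zero)).mul_left _
  simp_rw [sum_ghost_smul_eq_sum_artinHasseLog hp.ne_zero hX,
    artinHasseNil_eq_expNil_artinHasseLog, ← hQ]
  exact expNil_list_sum_aeval hX hdvd (List.range n)

/-- for a prime `p`, `n ≥ 1`, a commutative `ℚ`-algebra `Λ`, an associative
unital `Λ`-algebra `A`, a nilpotent `X ∈ A` with `X^(p^n) = 0`, and `t_0, …, t_{n-1} ∈ Λ`: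
`exp(∑_{j=0}^{n-1} p^{-j} w_j(t_0,…,t_j) X^(p^j)) = ∏_{m=0}^{n-1} F(t_m · X^(p^m))`,
where `w_j` is the `j`-th ghost (Witt) polynomial and `F` is the Artin–Hasse exponential
of a nilpotent element.  The product on the right is taken in the order `m = 0, 1, …, n-1`
(the factors pairwise commute, being polynomials in `X`). -/
theorem stmt5 (p : ℕ) (hp : p.Prime) (n : ℕ) (hn : 1 ≤ n)
    (Λ : Type*) [CommRing Λ] [Algebra ℚ Λ]
    (A : Type*) [Ring A] [Algebra ℚ A] [Algebra Λ A] [IsScalarTower ℚ Λ A]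
    (X : A) (hX : X ^ p ^ n = 0) (t : ℕ → Λ) :
    expNil (p ^ n)
        (∑ j ∈ Finset.range n, ((p : ℚ) ^ j)⁻¹ •
          (algebraMap Λ A (∑ m ∈ Finset.range (j + 1), (p : Λ) ^ m * t m ^ p ^ (j - m))
            * X ^ p ^ j))
      = ((List.range n).map fun m =>
          artinHasseNil p n (algebraMap Λ A (t m) * X ^ p ^ m)).prod :=
  stmt5_general p hp n Λ A X hX t
end

section
/- Let G and H be topological groups with G commutative, connected, and T1, and let φ: G → H be a surjective continuous group homomorphism whose kernel is finite. Then G and H have the same exponent: for a positive integer m, every element h ∈ H satisfies h^m = 1 if and only if every element g ∈ G satisfies g^m = 1. In particular, if every h ∈ H satisfies h^m = 1, then g^m = 1 for all g ∈ G. -/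
/-- `g ↦ g ^ m` is continuous from a preconnected space into a finite, hence discrete, set,
so it is constant, equal to its value `1` at `1`. -/
theorem pow_eq_one_of_forall_pow_mem_finite {G : Type*} [Monoid G] [TopologicalSpace G]
    [ContinuousMul G] [PreconnectedSpace G] [T1Space G] {S : Set G} (hS : S.Finite) {m : ℕ}
    (hmS : ∀ g : G, g ^ m ∈ S) (g : G) : g ^ m = 1 := by
  have hconst : g ^ m = (1 : G) ^ m :=
    isPreconnected_univ.constant_of_mapsTo hS.isDiscrete (continuous_pow m).continuousOn
      (fun x _ => hmS x) (Set.mem_univ g) (Set.mem_univ 1)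
  rwa [one_pow] at hconst

theorem stmt8_general {G H : Type*}
    [CommGroup G] [TopologicalSpace G] [IsTopologicalGroup G] [ConnectedSpace G] [T1Space G]
    [Group H]
    (φ : G →* H) (hsurj : Function.Surjective φ)
    (hker : (φ.ker : Set G).Finite)
    (m : ℕ) :
    (∀ h : H, h ^ m = 1) ↔ (∀ g : G, g ^ m = 1) := by
  refine ⟨fun hH => pow_eq_one_of_forall_pow_mem_finite hker fun g => ?_, fun hG h => ?_⟩
  · rw [SetLike.mem_coe, MonoidHom.mem_ker, map_pow]
    exact hH (φ g)
  · obtain ⟨g, rfl⟩ := hsurj h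
    rw [← map_pow, hG g, map_one]

/-- let `G` and `H` be topological groups with `G` commutative, connected and
T1, and let `φ : G → H` be a surjective continuous group homomorphism with finite kernel.
Then for every positive integer `m`, all elements of `H` have `m`-th power trivial iff all
elements of `G` do; in particular, if `h ^ m = 1` for all `h ∈ H`, then `g ^ m = 1` for
all `g ∈ G`. -/
theorem stmt8 {G H : Type*}
    [CommGroup G] [TopologicalSpace G] [IsTopologicalGroup G] [ConnectedSpace G] [T1Space G]
    [Group H] [TopologicalSpace H] [IsTopologicalGroup H]
    (φ : G →* H) (hcont : Continuous φ) (hsurj : Function.Surjective φ)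
    (hker : (φ.ker : Set G).Finite)
    (m : ℕ) (hm : 0 < m) :
    (∀ h : H, h ^ m = 1) ↔ (∀ g : G, g ^ m = 1) :=
  stmt8_general φ hsurj hker m
end

section
/- Let A be a discrete valuation ring with fraction field F and residue field k, and let L be a finite free A-module equipped with a direct sum decomposition L = ⨁_{i=0}^{d} L_{2i} into A-submodules, with L_0 ≠ 0 and L_{2d} ≠ 0; set L^+ = ⨁_{i=1}^{d} L_{2i}. Let ψ ∈ End_A(L) be an A-linear endomorphism of degree 2, i.e. ψ(L_{2i}) ⊆ L_{2i+2} for all i (so that ψ(L_{2d}) = 0 and ψ^{d+1} = 0). Suppose that the induced F-linear map ψ_F : L ⊗_A F → L^+ ⊗_A F is surjective, and that dim_k ker(ψ_k) = dim_F ker(ψ_F), where ψ_k is the induced k-linear endomorphism of L ⊗_A k. Then ψ : L → L^+ is surjective; in particular ψ_k^d ≠ 0, so the nilpotence degree of ψ_k equals d + 1 (the same as that of ψ_F). -/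
/-!
Put `P = ⨁_{i ≥ 1} L_{2i}`; it is free (a finitely generated submodule of a free module over a
PID) and contains `ψ(L)`. Flatness of `F` and `ψ_F(L_F) = P_F` give `rank ψ_F = rank P`;
rank–nullity and the equality of kernel dimensions turn this into `rank ψ_k = rank P`, so the
corestriction `L_k → P_k` is onto and Nakayama lifts this to `ψ(L) = P`. Comparing graded
components, `ψ` then maps `L_{2i}` onto `L_{2i+2}`, so `ψ^d` maps onto `L_{2d}`; if `ψ_k^d`
vanished, so would `L_{2d} ⊗ k`, and hence `L_{2d}` itself.
-/

open Module TensorProduct IsLocalRing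

section Nakayama

variable {R M N : Type*} [CommRing R] [IsLocalRing R] [AddCommGroup M] [Module R M]
  [AddCommGroup N] [Module R N] [Module.Finite R N]

theorem LinearMap.subsingleton_of_surjective_of_baseChange_residueField_eq_zero
    {f : M →ₗ[R] N} (hf : Function.Surjective f) (h0 : f.baseChange (ResidueField R) = 0) :
    Subsingleton N := by
  have hsurj : Function.Surjective (f.baseChange (ResidueField R)) := by
    rw [LinearMap.baseChange_eq_ltensor]
    exact LinearMap.lTensor_surjective _ hf
  rw [h0] at hsurj
  rw [← subsingleton_tensorProduct (R := R)]
  refine ⟨fun x y ↦ ?_⟩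
  obtain ⟨_, rfl⟩ := hsurj x
  obtain ⟨_, rfl⟩ := hsurj y
  rfl

theorem LinearMap.surjective_of_surjective_baseChange_residueField {f : M →ₗ[R] N}
    (hf : Function.Surjective (f.baseChange (ResidueField R))) : Function.Surjective f := by
  have hexact := lTensor_exact (ResidueField R) f.exact_map_mkQ_range
    (LinearMap.range f).mkQ_surjective
  have hmkQ : (LinearMap.range f).mkQ.baseChange (ResidueField R) = 0 := by
    refine LinearMap.ext fun y ↦ ?_
    obtain ⟨x, rfl⟩ := hf y
    have := hexact.apply_apply_eq_zero x
    rwa [← LinearMap.baseChange_eq_ltensor, ← LinearMap.baseChange_eq_ltensor] at this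
  have := subsingleton_of_surjective_of_baseChange_residueField_eq_zero
    (LinearMap.range f).mkQ_surjective hmkQ
  rwa [Submodule.Quotient.subsingleton_iff, LinearMap.range_eq_top] at this

end Nakayama

theorem Submodule.finrank_baseChange_of_flat {R B M : Type*} [CommRing R]
    [StrongRankCondition R] [CommRing B] [StrongRankCondition B] [Algebra R B] [Module.Flat R B]
    [AddCommGroup M] [Module R M] (p : Submodule R M) [Module.Free R p] :
    finrank B (p.baseChange B) = finrank R p := by
  rw [Submodule.baseChange, LinearMap.finrank_range_of_inj, finrank_baseChange]
  rw [LinearMap.baseChange_eq_ltensor]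
  exact Module.Flat.lTensor_preserves_injective_linearMap _ p.injective_subtype

theorem LinearMap.finrank_range_baseChange_eq_of_finrank_ker_eq {R K K' M N : Type*}
    [CommRing R] [StrongRankCondition R] [Field K] [Field K'] [Algebra R K] [Algebra R K']
    [AddCommGroup M] [Module R M] [Module.Free R M] [Module.Finite R M]
    [AddCommGroup N] [Module R N] (f : M →ₗ[R] N)
    (h : finrank K (LinearMap.ker (f.baseChange K)) =
      finrank K' (LinearMap.ker (f.baseChange K'))) :
    finrank K (LinearMap.range (f.baseChange K)) =
      finrank K' (LinearMap.range (f.baseChange K')) := by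
  have hK := (f.baseChange K).finrank_range_add_finrank_ker
  have hK' := (f.baseChange K').finrank_range_add_finrank_ker
  rw [finrank_baseChange] at hK hK'
  omega

theorem LinearMap.range_eq_of_finrank_le_finrank_range_baseChange_residueField {R M N : Type*}
    [CommRing R] [IsLocalRing R] [AddCommGroup M] [Module R M] [AddCommGroup N] [Module R N]
    {f : M →ₗ[R] N} {P : Submodule R N} [Module.Free R P] [Module.Finite R P]
    (hle : LinearMap.range f ≤ P)
    (hrank : finrank R P ≤
      finrank (ResidueField R) (LinearMap.range (f.baseChange (ResidueField R)))) :
    LinearMap.range f = P := by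
  set f' := f.codRestrict P fun x ↦ hle (LinearMap.mem_range_self f x)
  have hf : f = P.subtype ∘ₗ f' := (LinearMap.subtype_comp_codRestrict f P _).symm
  have hsurj : Function.Surjective (f'.baseChange (ResidueField R)) := by
    rw [← LinearMap.range_eq_top]
    refine Submodule.eq_top_of_finrank_eq (le_antisymm (Submodule.finrank_le _) ?_)
    calc finrank (ResidueField R) (ResidueField R ⊗[R] P)
        = finrank R P := finrank_baseChange
      _ ≤ finrank (ResidueField R) (LinearMap.range (f.baseChange (ResidueField R))) := hrank
      _ ≤ finrank (ResidueField R) (LinearMap.range (f'.baseChange (ResidueField R))) := by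
        rw [hf, LinearMap.baseChange_comp, LinearMap.range_comp]
        exact Submodule.finrank_map_le _ _
  rw [hf, LinearMap.range_comp,
    LinearMap.range_eq_top.mpr (surjective_of_surjective_baseChange_residueField hsurj),
    Submodule.map_top, Submodule.range_subtype]

namespace DirectSum.IsInternal

section Projection

variable {R M ι : Type*} [Semiring R] [AddCommMonoid M] [Module R M] [DecidableEq ι]
  {A : ι → Submodule R M} (h : IsInternal A)

noncomputable def proj (i : ι) : M →ₗ[R] A i :=
  component R ι (fun i ↦ A i) i ∘ₗ
    (LinearEquiv.ofBijective (coeLinearMap A) h).symm.toLinearMap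

theorem proj_of_mem {i : ι} {x : M} (hx : x ∈ A i) : h.proj i x = ⟨x, hx⟩ :=
  h.ofBijective_coeLinearMap_of_mem hx

theorem proj_of_mem_ne {i j : ι} (hij : i ≠ j) {x : M} (hx : x ∈ A i) : h.proj j x = 0 :=
  h.ofBijective_coeLinearMap_of_mem_ne hij hx

theorem proj_surjective (i : ι) : Function.Surjective (h.proj i) :=
  fun x ↦ ⟨x, h.proj_of_mem x.2⟩

end Projection

theorem baseChange_residueField_ne_zero_of_le_range {R M N ι : Type*}
    [CommRing R] [IsLocalRing R] [AddCommGroup M] [Module R M] [Module.Finite R M]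
    [AddCommGroup N] [Module R N] [DecidableEq ι] {A : ι → Submodule R M} (h : IsInternal A)
    {i : ι} (hi : A i ≠ ⊥) {g : N →ₗ[R] M} (hg : A i ≤ LinearMap.range g) :
    g.baseChange (ResidueField R) ≠ 0 := by
  intro hg0
  have : Module.Finite R (A i) := Module.Finite.of_surjective _ (h.proj_surjective i)
  have hsurj : Function.Surjective (h.proj i ∘ₗ g) := fun x ↦ by
    obtain ⟨y, hy⟩ := hg x.2
    exact ⟨y, by rw [LinearMap.comp_apply, hy, h.proj_of_mem]⟩
  refine hi (Submodule.subsingleton_iff_eq_bot.mp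
    (LinearMap.subsingleton_of_surjective_of_baseChange_residueField_eq_zero hsurj ?_))
  rw [LinearMap.baseChange_comp, hg0, LinearMap.comp_zero]

section Graded

variable {R M : Type*} [Semiring R] [AddCommMonoid M] [Module R M] {A : ℕ → Submodule R M}
  (h : IsInternal A) {ψ : M →ₗ[R] M} (hψ : ∀ i, (A i).map ψ ≤ A (i + 1))
include h hψ

theorem range_le_iSup_pos : LinearMap.range ψ ≤ ⨆ i, ⨆ _ : 1 ≤ i, A i := by
  rw [← Submodule.map_top, ← h.submodule_iSup_eq_top, Submodule.map_iSup]
  exact iSup_le fun i ↦ (hψ i).trans (le_iSup₂_of_le (i + 1) (Nat.le_add_left 1 i) le_rfl)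

theorem coe_proj_succ_apply (i : ℕ) (x : M) : (h.proj (i + 1) (ψ x) : M) = ψ (h.proj i x) := by
  have hx : x ∈ ⨆ j, A j := h.submodule_iSup_eq_top ▸ Submodule.mem_top
  refine Submodule.iSup_induction A
    (motive := fun x ↦ (h.proj (i + 1) (ψ x) : M) = ψ (h.proj i x)) hx (fun j y hy ↦ ?_)
    (by simp) fun y z hy hz ↦ by simp only [map_add, Submodule.coe_add, hy, hz]
  have hψy : ψ y ∈ A (j + 1) := hψ j ⟨y, hy, rfl⟩
  by_cases hji : j = i
  · subst hji
    rw [h.proj_of_mem hψy, h.proj_of_mem hy]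
  · rw [h.proj_of_mem_ne (by omega) hψy, h.proj_of_mem_ne hji hy, Submodule.coe_zero,
      Submodule.coe_zero, map_zero]

theorem le_map_of_le_range {i : ℕ} (hrange : A (i + 1) ≤ LinearMap.range ψ) :
    A (i + 1) ≤ (A i).map ψ := by
  intro x hx
  obtain ⟨y, rfl⟩ := hrange hx
  refine ⟨h.proj i y, (h.proj i y).2, ?_⟩
  rw [← h.coe_proj_succ_apply hψ, h.proj_of_mem hx]

theorem le_range_pow (hrange : ∀ i, A (i + 1) ≤ LinearMap.range ψ) (j : ℕ) :
    A j ≤ LinearMap.range (ψ ^ j) := by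
  induction j with
  | zero => exact fun x _ ↦ ⟨x, rfl⟩
  | succ j ih =>
    calc A (j + 1) ≤ (A j).map ψ := h.le_map_of_le_range hψ (hrange j)
      _ ≤ (LinearMap.range (ψ ^ j)).map ψ := Submodule.map_mono ih
      _ = LinearMap.range (ψ ^ (j + 1)) := by
        rw [pow_succ', Module.End.mul_eq_comp, LinearMap.range_comp]

end Graded

end DirectSum.IsInternal

theorem stmt9_general (A : Type*) [CommRing A] [IsDomain A] [IsDiscreteValuationRing A]
    (F : Type*) [Field F] [Algebra A F] [IsFractionRing A F]
    (L : Type*) [AddCommGroup L] [Module A L] [Module.Finite A L] [Module.Free A L]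
    (d : ℕ) (Lc : ℕ → Submodule A L)
    (hinternal : DirectSum.IsInternal Lc)
    (hd : Lc d ≠ ⊥)
    (ψ : L →ₗ[A] L)
    (hdeg : ∀ i, Submodule.map ψ (Lc i) ≤ Lc (i + 1))
    (hsurjF : LinearMap.range (ψ.baseChange F)
        = Submodule.baseChange F (⨆ i, ⨆ _ : 1 ≤ i, Lc i))
    (hker : Module.finrank (IsLocalRing.ResidueField A)
          (LinearMap.ker (ψ.baseChange (IsLocalRing.ResidueField A)))
        = Module.finrank F (LinearMap.ker (ψ.baseChange F))) :
    LinearMap.range ψ = (⨆ i, ⨆ _ : 1 ≤ i, Lc i)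
      ∧ (ψ.baseChange (IsLocalRing.ResidueField A)) ^ d ≠ 0 := by
  have : Module.Flat A F := IsLocalization.flat F (nonZeroDivisors A)
  have hrange : LinearMap.range ψ = ⨆ i, ⨆ _ : 1 ≤ i, Lc i := by
    refine ψ.range_eq_of_finrank_le_finrank_range_baseChange_residueField
      (hinternal.range_le_iSup_pos hdeg) ?_
    rw [ψ.finrank_range_baseChange_eq_of_finrank_ker_eq hker, hsurjF,
      Submodule.finrank_baseChange_of_flat]
  refine ⟨hrange, ?_⟩
  rw [← LinearMap.baseChange_pow]
  refine hinternal.baseChange_residueField_ne_zero_of_le_range hd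
    (hinternal.le_range_pow hdeg (fun i ↦ ?_) d)
  rw [hrange]
  exact le_iSup₂_of_le (i + 1) (Nat.le_add_left 1 i) le_rfl

/-- let `A` be a DVR with fraction field `F` and residue field `k`, and let
`L` be a finite free `A`-module with an internal direct sum decomposition
`L = ⨁_{i=0}^{d} L_{2i}` (indexed here by `i = 0, …, d`, with `Lc i = ⊥` for `i > d`),
`L_0 ≠ 0` and `L_{2d} ≠ 0`; set `L⁺ = ⨁_{i=1}^{d} L_{2i}`.  Let `ψ` be an `A`-linear
endomorphism of `L` of degree `2`, i.e. `ψ(L_{2i}) ⊆ L_{2i+2}` for all `i` (so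
`ψ(L_{2d}) = 0` and `ψ^{d+1} = 0`).  If the induced map `ψ_F : L ⊗ F → L⁺ ⊗ F` is
surjective and `dim_k ker ψ_k = dim_F ker ψ_F`, then `ψ : L → L⁺` is surjective; in
particular `ψ_k ^ d ≠ 0`, so the nilpotence degree of `ψ_k` is `d + 1`. -/
theorem stmt9 (A : Type*) [CommRing A] [IsDomain A] [IsDiscreteValuationRing A]
    (F : Type*) [Field F] [Algebra A F] [IsFractionRing A F]
    (L : Type*) [AddCommGroup L] [Module A L] [Module.Finite A L] [Module.Free A L]
    (d : ℕ) (Lc : ℕ → Submodule A L)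
    (hinternal : DirectSum.IsInternal Lc)
    (hbdd : ∀ i, d < i → Lc i = ⊥)
    (h0 : Lc 0 ≠ ⊥) (hd : Lc d ≠ ⊥)
    (ψ : L →ₗ[A] L)
    (hdeg : ∀ i, Submodule.map ψ (Lc i) ≤ Lc (i + 1))
    (hsurjF : LinearMap.range (ψ.baseChange F)
        = Submodule.baseChange F (⨆ i, ⨆ _ : 1 ≤ i, Lc i))
    (hker : Module.finrank (IsLocalRing.ResidueField A)
          (LinearMap.ker (ψ.baseChange (IsLocalRing.ResidueField A)))
        = Module.finrank F (LinearMap.ker (ψ.baseChange F))) :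
    LinearMap.range ψ = (⨆ i, ⨆ _ : 1 ≤ i, Lc i)
      ∧ (ψ.baseChange (IsLocalRing.ResidueField A)) ^ d ≠ 0 :=
  stmt9_general A F L d Lc hinternal hd ψ hdeg hsurjF hker
end

section
/- Let k be a commutative ring of prime characteristic p, and consider the k-derivation D = ∂/∂X + X^{p−1}·∂/∂Y of the polynomial ring k[X,Y]. Then the p-th power of D (composition of k-linear endomorphisms of k[X,Y]) is again a derivation, and D^p = (p−1)!·∂/∂Y = −∂/∂Y. In particular, the k-span of D and ∂/∂Y is a 2-dimensional abelian Lie subalgebra of the derivations of k[X,Y] that is closed under taking p-th powers, with D and D^p as a basis (this realizes the Lie algebra of the Witt group W_2). -/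
/-!
Writing `L_a` for multiplication by `a` and `R_D` for right composition with `D` on
`End_k(A)`, the Leibniz rule says `ad_D (L_a) = L_{D a}`. Since `ad_D` and `R_D` commute and
`ad_D + R_D` is left composition with `D`, expanding `(ad_D + R_D)^p` in characteristic `p`
gives `D^p ∘ L_a = L_{D^p a} + L_a ∘ D^p`, so `D^p` is a derivation. For
`D = ∂/∂X + X^(p-1) ∂/∂Y` it then suffices to evaluate on the generators:
`D^p X = D^(p-1) 1 = 0` and `D^p Y = D^(p-1) X^(p-1) = (p-1)! = -1` by Wilson's theorem.
Finally `D` commutes with `D^p = -∂/∂Y`.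
-/

open MvPolynomial

namespace Derivation

variable {k A : Type*} [CommRing k] [CommRing A] [Algebra k A] (D : Derivation k A A)

lemma toLinearMap_mul_mulLeft_sub_mulLeft_mul (a : A) :
    D.toLinearMap * LinearMap.mulLeft k a - LinearMap.mulLeft k a * D.toLinearMap =
      LinearMap.mulLeft k (D a) := by
  ext b
  simp [D.leibniz, mul_comm]

lemma mulLeft_sub_mulRight_pow_apply_mulLeft (n : ℕ) (a : A) :
    ((LinearMap.mulLeft k D.toLinearMap - LinearMap.mulRight k D.toLinearMap) ^ n)
        (LinearMap.mulLeft k a) = LinearMap.mulLeft k ((D.toLinearMap ^ n) a) := by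
  induction n with
  | zero => rfl
  | succ n ih =>
    rw [pow_succ', Module.End.mul_apply, ih, LinearMap.sub_apply, LinearMap.mulLeft_apply,
      LinearMap.mulRight_apply, toLinearMap_mul_mulLeft_sub_mulLeft_mul, pow_succ', Module.End.mul_apply]
    rfl

lemma leibniz_pow_char {p : ℕ} (hp : p.Prime) [CharP A p] (a b : A) :
    (D.toLinearMap ^ p) (a * b) =
      a * (D.toLinearMap ^ p) b + b * (D.toLinearMap ^ p) a := by
  have hcomm : Commute
      (LinearMap.mulLeft k D.toLinearMap - LinearMap.mulRight k D.toLinearMap :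
        Module.End k (Module.End k A)) (LinearMap.mulRight k D.toLinearMap) :=
    Commute.sub_left (R := Module.End k (Module.End k A))
      (LinearMap.commute_mulLeft_right _ _) (.refl _)
  -- the cross term `p * _` vanishes once applied, as `A` has characteristic `p`
  obtain ⟨r, hr⟩ := hcomm.exists_add_pow_prime_eq hp
  have := congr($hr (LinearMap.mulLeft k a) b)
  rw [sub_add_cancel (G := Module.End k (Module.End k A))] at this
  simp only [LinearMap.pow_mulLeft, LinearMap.mulLeft_apply, Module.End.mul_apply,
    LinearMap.pow_mulRight, LinearMap.add_apply, mulLeft_sub_mulRight_pow_apply_mulLeft,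
    LinearMap.mulRight_apply, LinearMap.sub_apply, Module.End.natCast_apply, nsmul_eq_mul,
    coeFn_coe, CharP.cast_eq_zero, zero_mul, add_zero] at this
  rw [this, mul_comm _ b, add_comm]

lemma exists_toLinearMap_eq_pow_char {p : ℕ} (hp : p.Prime) [CharP A p] :
    ∃ D' : Derivation k A A, D'.toLinearMap = D.toLinearMap ^ p :=
  ⟨mk' _ (D.leibniz_pow_char hp), rfl⟩

lemma pow_succ_apply_one (n : ℕ) : (D.toLinearMap ^ (n + 1)) 1 = 0 := by
  rw [pow_succ, Module.End.mul_apply, coeFn_coe, map_one_eq_zero, map_zero]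

lemma pow_apply_pow_of_apply_eq_one {x : A} (hx : D x = 1) (n : ℕ) :
    (D.toLinearMap ^ n) (x ^ n) = n.factorial := by
  induction n with
  | zero => simp
  | succ n ih =>
    rw [pow_succ, Module.End.mul_apply, coeFn_coe, leibniz_pow, hx, add_tsub_cancel_right,
      smul_eq_mul, mul_one, map_nsmul, ih, nsmul_eq_mul, Nat.factorial_succ, Nat.cast_mul]

end Derivation

lemma CharP.cast_factorial_pred_eq_neg_one {p : ℕ} (hp : p.Prime) (R : Type*) [Ring R]
    [CharP R p] : ((p - 1).factorial : R) = -1 := by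
  have : Fact p.Prime := ⟨hp⟩
  have := congrArg (ZMod.castHom (dvd_refl p) R) (ZMod.wilsons_lemma (p := p))
  rwa [map_natCast, map_neg, map_one] at this

/-- let `k` be a commutative ring of prime characteristic `p`, and consider
the `k`-derivation `D = ∂/∂X + X^(p-1) ∂/∂Y` of `k[X,Y]`.  Then the `p`-th power of `D`
(composition of `k`-linear endomorphisms of `k[X,Y]`) is again a derivation: indeed
`D^p = (p-1)! • ∂/∂Y = -∂/∂Y`.  In particular `D` and `∂/∂Y` commute, so the `k`-span of
`D` and `D^p = -∂/∂Y` is a 2-dimensional abelian Lie subalgebra of the derivations of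
`k[X,Y]`, closed under `p`-th powers (realizing the Lie algebra of the Witt group `W₂`). -/
theorem stmt11 (p : ℕ) (hp : p.Prime) (k : Type*) [CommRing k] [CharP k p]
    (D : Derivation k (MvPolynomial (Fin 2) k) (MvPolynomial (Fin 2) k))
    (hD : D = pderiv 0 + (X 0 : MvPolynomial (Fin 2) k) ^ (p - 1) • pderiv 1) :
    D.toLinearMap ^ p = (((p - 1).factorial : k)) • (pderiv (R := k) (1 : Fin 2)).toLinearMap
      ∧ D.toLinearMap ^ p = -(pderiv (R := k) (1 : Fin 2)).toLinearMap
      ∧ Commute D.toLinearMap (pderiv (R := k) (1 : Fin 2)).toLinearMap := by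
  have hDX0 : D (X 0) = 1 := by simp [hD]
  have hDX1 : D (X 1) = X 0 ^ (p - 1) := by simp [hD]
  obtain ⟨Dp, hDp⟩ := D.exists_toLinearMap_eq_pow_char hp
  obtain ⟨m, rfl⟩ : ∃ m, p = m + 2 := ⟨p - 2, by have := hp.two_le; omega⟩
  have hDp_eq : Dp = -pderiv 1 := by
    refine derivation_ext fun i => ?_
    rw [← Derivation.coeFn_coe, hDp, pow_succ, Module.End.mul_apply, Derivation.coeFn_coe]
    fin_cases i
    · simp [hDX0, D.pow_succ_apply_one]
    · simpa [hDX1, D.pow_apply_pow_of_apply_eq_one hDX0] using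
        CharP.cast_factorial_pred_eq_neg_one hp (MvPolynomial (Fin 2) k)
  have hpow : D.toLinearMap ^ (m + 2) = -(pderiv (R := k) 1).toLinearMap := by
    rw [← hDp, hDp_eq]; rfl
  refine ⟨?_, hpow, ?_⟩
  · rw [hpow, CharP.cast_factorial_pred_eq_neg_one hp, (neg_one_smul k _).symm]
  · have := (Commute.refl D.toLinearMap).pow_right (m + 2)
    rw [hpow] at this
    exact Commute.neg_right_iff.mp this
end

section
/- Let p be a prime, let L be a finite free module over ℤ_(p) (the localization of ℤ at p), and let V = L ⊗_{ℤ_(p)} ℚ. Suppose u is a ℚ-linear endomorphism of V such that u(L) ⊆ L, u^p(L) ⊆ p·L, and u^{p^2} = 0. Then the endomorphism exp(u) = ∑_{i=0}^{p^2−1} u^i/i! of V maps L into L; that is, for every i ≥ 0 and every v ∈ L, the element u^i(v)/i! lies in L. -/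
/-!
Write `i = p q + r` with `r < p`. Then `u^i v = p^q • u^r w` for some `w ∈ L`, while for
`i < p²` Legendre's formula gives `v_p(i!) = q`, so `p^q / i!` is a `p`-adic unit and
`u^i v / i! = (p^q / i!) • u^r w ∈ L`. For `i ≥ p²` we have `u^i = 0`.
-/

open scoped Nat
open Set

section PowersOfEndomorphism

variable {K V : Type*} [CommSemiring K] [AddCommMonoid V] [Module K V]
  {L : Set V} {u : Module.End K V}

lemma Module.End.mapsTo_pow (huL : MapsTo u L L) (r : ℕ) : MapsTo (u ^ r) L L := by
  simpa only [Module.End.coe_pow] using huL.iterate r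

variable {n : ℕ} {c : K}

lemma Module.End.exists_pow_mul_apply_eq_pow_smul
    (hn : ∀ v ∈ L, ∃ w ∈ L, (u ^ n) v = c • w) (q : ℕ) :
    ∀ v ∈ L, ∃ w ∈ L, (u ^ (n * q)) v = c ^ q • w := by
  induction q with
  | zero => exact fun v hv ↦ ⟨v, hv, by simp⟩
  | succ q ih =>
    intro v hv
    obtain ⟨w, hw, hvw⟩ := hn v hv
    obtain ⟨w', hw', hww'⟩ := ih w hw
    refine ⟨w', hw', ?_⟩
    rw [Nat.mul_succ, pow_add, Module.End.mul_apply, hvw, map_smul, hww', smul_smul, pow_succ']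

lemma Module.End.exists_pow_apply_eq_pow_div_smul (huL : MapsTo u L L)
    (hn : ∀ v ∈ L, ∃ w ∈ L, (u ^ n) v = c • w) (i : ℕ) :
    ∀ v ∈ L, ∃ w ∈ L, (u ^ i) v = c ^ (i / n) • w := by
  intro v hv
  obtain ⟨w, hw, hvw⟩ := exists_pow_mul_apply_eq_pow_smul hn (i / n) v hv
  refine ⟨(u ^ (i % n)) w, mapsTo_pow huL _ hw, ?_⟩
  rw [← map_smul, ← hvw, ← Module.End.mul_apply, ← pow_add, Nat.mod_add_div]

end PowersOfEndomorphism

lemma Nat.factorization_factorial_of_lt_sq {p i : ℕ} (hp : p.Prime) (hi : i < p ^ 2) :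
    (i !).factorization p = i / p := by
  have : Fact p.Prime := ⟨hp⟩
  have hlog : Nat.log p i < 2 := by
    rcases Nat.eq_zero_or_pos i with rfl | hi0
    · simp
    · exact Nat.log_lt_of_lt_pow hi0.ne' hi
  rw [Nat.factorization_def _ hp, padicValNat_factorial hlog]
  simp

lemma Rat.not_dvd_den_ordProj_div {p n : ℕ} (hp : p.Prime) (hn : n ≠ 0) :
    ¬ p ∣ ((p : ℚ) ^ n.factorization p / n).den := by
  set m := ordCompl[p] n
  have hcompl : 0 < m := Nat.ordCompl_pos p hn
  have hdecomp : (n : ℚ) = (p : ℚ) ^ n.factorization p * m := by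
    exact_mod_cast (Nat.ordProj_mul_ordCompl_eq_self n p).symm
  have hpk : (p : ℚ) ^ n.factorization p ≠ 0 := pow_ne_zero _ (by exact_mod_cast hp.ne_zero)
  rw [hdecomp, div_mul_cancel_left₀ hpk, Rat.inv_natCast_den_of_pos hcompl]
  exact Nat.not_dvd_ordCompl hp hn

theorem stmt12_general (p : ℕ) (hp : p.Prime)
    (R : Subring ℚ) (hR : ∀ q : ℚ, q ∈ R ↔ ¬ (p : ℕ) ∣ q.den)
    (V : Type*) [AddCommGroup V] [Module ℚ V]
    (L : Submodule R V)
    (u : V →ₗ[ℚ] V)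
    (huL : ∀ v ∈ L, u v ∈ L)
    (hup : ∀ v ∈ L, ∃ w ∈ L, (u ^ p) v = (p : ℚ) • w)
    (hu2 : u ^ (p ^ 2) = 0) :
    ∀ (i : ℕ), ∀ v ∈ L, ((i.factorial : ℚ)⁻¹) • (u ^ i) v ∈ L := by
  intro i v hv
  rcases lt_or_ge i (p ^ 2) with hi | hi
  · obtain ⟨w, hw, hvw⟩ := Module.End.exists_pow_apply_eq_pow_div_smul huL hup i v hv
    have hunit : (i ! : ℚ)⁻¹ * (p : ℚ) ^ (i / p) ∈ R := by
      rw [hR, inv_mul_eq_div, ← Nat.factorization_factorial_of_lt_sq hp hi]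
      exact Rat.not_dvd_den_ordProj_div hp (Nat.factorial_ne_zero i)
    rw [hvw, smul_smul]
    exact L.smul_mem ⟨_, hunit⟩ hw
  · simp [pow_eq_zero_of_le hi hu2]

/-- let `p` be a prime, let `R ⊆ ℚ` be the subring `ℤ_(p)` of rationals
whose denominator is prime to `p` (i.e. with nonnegative `p`-adic valuation), let `V` be
a `ℚ`-vector space, and let `L` be an `R`-submodule of `V` which is a finite free
`R`-module spanning `V` over `ℚ` (a `ℤ_(p)`-lattice, `V = L ⊗ ℚ`).  Let `u` be a
`ℚ`-linear endomorphism of `V` with `u(L) ⊆ L`, `u^p(L) ⊆ p·L` and `u^(p²) = 0`.  Then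
`exp(u) = ∑_{i} u^i / i!` maps `L` into `L`: for every `i ≥ 0` and every `v ∈ L`, the
element `u^i(v)/i!` lies in `L`. -/
theorem stmt12 (p : ℕ) (hp : p.Prime)
    (R : Subring ℚ) (hR : ∀ q : ℚ, q ∈ R ↔ ¬ (p : ℕ) ∣ q.den)
    (V : Type*) [AddCommGroup V] [Module ℚ V]
    (L : Submodule R V) [Module.Finite R L] [Module.Free R L]
    (hspan : Submodule.span ℚ (L : Set V) = ⊤)
    (u : V →ₗ[ℚ] V)
    (huL : ∀ v ∈ L, u v ∈ L)
    (hup : ∀ v ∈ L, ∃ w ∈ L, (u ^ p) v = (p : ℚ) • w)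
    (hu2 : u ^ (p ^ 2) = 0) :
    ∀ (i : ℕ), ∀ v ∈ L, ((i.factorial : ℚ)⁻¹) • (u ^ i) v ∈ L :=
  stmt12_general p hp R hR V L u huL hup hu2
end
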